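/- Let X be a spectral space. Then: (1) if X is finite with n elements, the Krull dimension of 𝒳(X) equals n − 1; (2) if X is infinite, the Krull dimension of 𝒳(X) is infinite; (3) in all cases dim(𝒳(X)) ≥ dim(X); and (4) if X is finite, then dim(𝒳(X)) = dim(X) if and only if the specialization order ≤ on X is a total (linear) order. -/

import Mathlib

/-!
Points of `𝒳(X)` specialize exactly along inclusion, so chains in `𝒳(X)` are strict chains
of nonempty inverse-closed sets. If `f₀, …, fₘ` lists distinct points of `X` so that no `fᵢ`
is a generization of a later `fⱼ` (a linear extension of the specialization order), then the
sets of generizations of `{f_k, …, f_m}` are inverse-closed and strictly decrease in `k`: a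
chain of length `m`. Every finite subset of `X` can be listed this way, which gives the lower
bounds in (1) and (2), and so can every chain of `X`, which gives (3). Conversely a chain of
nonempty subsets of an `n`-element set has length at most `n - 1`. Finally (4): a finite
poset with `n` elements has dimension `n - 1` exactly when it is a chain.
-/
open Set TopologicalSpace Topology

/-- A subset of a topological space is *inverse-closed* if it is an intersection of a
family of quasi-compact open subsets. -/
def InvClosed {X : Type*} [TopologicalSpace X] (Y : Set X) : Prop :=
  ∃ 𝒪 : Set (Set X), (∀ U ∈ 𝒪, IsOpen U ∧ IsCompact U) ∧ Y = ⋂₀ 𝒪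

/-- A subset is *saturated* if it is an intersection of open sets. -/
def IsSatd {X : Type*} [TopologicalSpace X] (Y : Set X) : Prop :=
  ∃ 𝒪 : Set (Set X), (∀ U ∈ 𝒪, IsOpen U) ∧ Y = ⋂₀ 𝒪

/-- A topological space is *spectral* if it is T0, quasi-compact, sober, and the
quasi-compact open subsets form a basis closed under finite intersections. -/
def IsSpectralSpace (X : Type*) [TopologicalSpace X] : Prop :=
  T0Space X ∧ CompactSpace X ∧ QuasiSober X ∧
    IsTopologicalBasis {U : Set X | IsOpen U ∧ IsCompact U} ∧
    ∀ U V : Set X, IsOpen U → IsCompact U → IsOpen V → IsCompact V → IsCompact (U ∩ V)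

/-- `𝒳(X)`: the nonempty inverse-closed subsets of `X`. -/
abbrev XCal (X : Type*) [TopologicalSpace X] : Type _ :=
  {Y : Set X // Y.Nonempty ∧ InvClosed Y}

/-- The Zariski topology on `𝒳(X)`, with basic open sets `𝒰(Ω) = {Y : Y ⊆ Ω}` for `Ω`
quasi-compact open in `X`. -/
instance XCal.instTop (X : Type*) [TopologicalSpace X] : TopologicalSpace (XCal X) :=
  generateFrom {S : Set (XCal X) | ∃ Ω : Set X, IsOpen Ω ∧ IsCompact Ω ∧
    S = {Y : XCal X | (Y : Set X) ⊆ Ω}}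

/-- The specialization-type order: `x ≤ y` iff `y ∈ closure {x}`. -/
def spord {X : Type*} [TopologicalSpace X] (x y : X) : Prop := y ∈ closure {x}

/-- Closure under generizations of a set `S`: all points `z ≤ s` for some `s ∈ S`. -/
def genOf {X : Type*} [TopologicalSpace X] (S : Set X) : Set X :=
  {z : X | ∃ s ∈ S, spord z s}

/-- A map is *spectral* if preimages of quasi-compact open sets are quasi-compact open. -/
def SpecMap {X Y : Type*} [TopologicalSpace X] [TopologicalSpace Y] (f : X → Y) : Prop :=
  ∀ Ω : Set Y, IsOpen Ω → IsCompact Ω → IsOpen (f ⁻¹' Ω) ∧ IsCompact (f ⁻¹' Ω)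

/-- The constructible topology on a spectral space: generated by the quasi-compact open
sets together with their complements. -/
def constructibleTop (X : Type*) [TopologicalSpace X] : TopologicalSpace X :=
  generateFrom ({U : Set X | IsOpen U ∧ IsCompact U} ∪
    {S : Set X | ∃ U : Set X, IsOpen U ∧ IsCompact U ∧ S = Uᶜ})

/-- `s` is the supremum of `S` for the order induced by the topology. -/
def IsSupOf {X : Type*} [TopologicalSpace X] (S : Set X) (s : X) : Prop :=
  (∀ c ∈ S, spord c s) ∧ ∀ t : X, (∀ c ∈ S, spord c t) → spord s t

/-- A map is sup-preserving if it sends existing finite suprema to suprema. -/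
def SupPreserving {X Y : Type*} [TopologicalSpace X] [TopologicalSpace Y] (f : X → Y) : Prop :=
  ∀ F : Set X, F.Finite → ∀ s : X, IsSupOf F s → IsSupOf (f '' F) (f s)

/-- A map is open onto its image. -/
def OpenOntoImage {X Y : Type*} [TopologicalSpace X] [TopologicalSpace Y] (f : X → Y) : Prop :=
  ∀ V : Set X, IsOpen V → ∃ W : Set Y, IsOpen W ∧ f '' V = W ∩ Set.range f

/-- Enumerate `s` along a linear extension of its order (Szpilrajn). -/
theorem Finset.exists_fin_le_imp_le {α : Type*} [PartialOrder α] (s : Finset α) {n : ℕ}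
    (hn : s.card = n) : ∃ g : Fin n → α, ∀ i j, g i ≤ g j → i ≤ j := by
  let _ : Fintype (LinearExtension s) := inferInstanceAs (Fintype s)
  let e := Fintype.orderIsoFinOfCardEq (LinearExtension s) (hn ▸ Fintype.card_coe s)
  let toS : LinearExtension s → s := id
  refine ⟨fun i => toS (e i), fun i j h => ?_⟩
  have hext : toLinearExtension (toS (e i)) ≤ toLinearExtension (toS (e j)) :=
    toLinearExtension.monotone (Subtype.coe_le_coe.mp h)
  exact e.le_iff_le.mp hext

section FinitePoset
open Order
variable {α : Type*} [PartialOrder α] [Finite α]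

theorem krullDim_le_natCard_sub_one : krullDim α ≤ (Nat.card α - 1 : ℕ) := by
  have := Fintype.ofFinite α
  refine iSup_le fun p => ?_
  have := p.length_lt_card
  rw [← Nat.card_eq_fintype_card] at this
  exact_mod_cast (by omega : p.length ≤ Nat.card α - 1)

theorem krullDim_eq_natCard_sub_one_iff [Nonempty α] :
    krullDim α = (Nat.card α - 1 : ℕ) ↔ ∀ a b : α, a ≤ b ∨ b ≤ a := by
  have := Fintype.ofFinite α
  have hcard : 0 < Nat.card α := Nat.card_pos
  constructor
  · intro h a b
    obtain ⟨p, hp⟩ := le_krullDim_iff.mp h.ge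
    have hsurj : Function.Surjective p := by
      refine (Finite.injective_iff_surjective_of_equiv ?_).mp p.strictMono.injective
      exact (Finite.equivFinOfCardEq (by omega)).symm
    obtain ⟨i, rfl⟩ := hsurj a
    obtain ⟨j, rfl⟩ := hsurj b
    exact (le_total i j).imp (p.strictMono.monotone ·) (p.strictMono.monotone ·)
  · intro htotal
    obtain ⟨g, hg⟩ := (Finset.univ : Finset α).exists_fin_le_imp_le (n := Nat.card α - 1 + 1)
      (by rw [Finset.card_univ, ← Nat.card_eq_fintype_card]
          exact (Nat.sub_add_cancel hcard).symm)
    have hmono : StrictMono g := fun i j hij => by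
      have hle : g i ≤ g j := (htotal (g i) (g j)).resolve_right fun h => (hg j i h).not_gt hij
      exact hle.lt_of_ne fun h => (hg j i h.ge).not_gt hij
    exact le_antisymm krullDim_le_natCard_sub_one
      (LTSeries.mk _ g hmono).length_le_krullDim

end FinitePoset

section Generizations
variable {X : Type*} [TopologicalSpace X]

theorem spord_iff_specializes {x y : X} : spord x y ↔ x ⤳ y :=
  specializes_iff_mem_closure.symm

theorem mem_genOf {S : Set X} {z : X} : z ∈ genOf S ↔ ∃ s ∈ S, z ⤳ s := by
  simp only [genOf, mem_ofPred_eq, spord_iff_specializes]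

theorem subset_genOf (S : Set X) : S ⊆ genOf S :=
  fun s hs => mem_genOf.mpr ⟨s, hs, specializes_rfl⟩

theorem genOf_mono {S S' : Set X} (h : S ⊆ S') : genOf S ⊆ genOf S' :=
  fun _ ⟨s, hs, hzs⟩ => ⟨s, h hs, hzs⟩

/-- A point outside `genOf F` is separated from each point of `F` by a quasi-compact open set;
their union is a quasi-compact open neighbourhood of `F` missing it. -/
theorem invClosed_genOf (hB : IsTopologicalBasis {U : Set X | IsOpen U ∧ IsCompact U})
    {F : Set X} (hF : F.Finite) : InvClosed (genOf F) := by
  refine ⟨{U | (IsOpen U ∧ IsCompact U) ∧ F ⊆ U}, fun U hU => hU.1, ?_⟩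
  ext z
  simp only [mem_sInter, mem_ofPred_eq, and_imp, mem_genOf]
  constructor
  · rintro ⟨s, hs, hzs⟩ U hU - hFU
    exact hzs.mem_open hU (hFU hs)
  · intro hz
    by_contra! hzF
    have hsep : ∀ s ∈ F, ∃ V, (IsOpen V ∧ IsCompact V) ∧ s ∈ V ∧ z ∉ V := by
      intro s hs
      obtain ⟨U, hU, hsU, hzU⟩ : ∃ U, IsOpen U ∧ s ∈ U ∧ z ∉ U := by
        simpa [specializes_iff_forall_open] using hzF s hs
      obtain ⟨V, hV, hsV, hVU⟩ := hB.exists_subset_of_mem_open hsU hU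
      exact ⟨V, hV, hsV, fun hzV => hzU (hVU hzV)⟩
    choose! V hV hsV hzV using hsep
    obtain ⟨s, hs, hzs⟩ := mem_iUnion₂.mp <| hz (⋃ s ∈ F, V s)
      (isOpen_biUnion fun s hs => (hV s hs).1) (hF.isCompact_biUnion fun s hs => (hV s hs).2)
      fun s hs => mem_iUnion₂.mpr ⟨s, hs, hsV s hs⟩
    exact hzV s hs hzs

end Generizations

section SpecializationOrder
open Order
variable {T : Type*} [TopologicalSpace T]

theorem quasiSober_of_finite [Finite T] : QuasiSober T := by
  classical
  refine ⟨fun {S} hS hSc => ?_⟩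
  obtain ⟨Z, hZ, hSZ⟩ := isIrreducible_iff_sUnion_isClosed.mp hS
    (S.toFinite.toFinset.image fun x => closure {x}) (by simp [isClosed_closure])
    fun x hx => mem_sUnion.mpr ⟨closure {x}, by simpa using ⟨x, hx, rfl⟩, subset_closure rfl⟩
  obtain ⟨x, hx, rfl⟩ := by simpa using hZ
  exact ⟨x, (closure_minimal (singleton_subset_iff.mpr hx) hSc).antisymm hSZ⟩

def Specialization.toIrreducibleCloseds [T0Space T] : Specialization T ↪o IrreducibleCloseds T :=
  OrderEmbedding.ofMapLEIff
    (fun x => ⟨closure {ofEquiv x}, isIrreducible_singleton.closure, isClosed_closure⟩)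
    fun _ _ => specializes_iff_closure_subset.symm

theorem krullDim_specialization_le_topologicalKrullDim [T0Space T] :
    krullDim (Specialization T) ≤ topologicalKrullDim T :=
  krullDim_le_of_strictMono _ Specialization.toIrreducibleCloseds.strictMono

theorem topologicalKrullDim_eq_krullDim_specialization [T0Space T] [QuasiSober T] :
    topologicalKrullDim T = krullDim (Specialization T) := by
  refine (krullDim_eq_of_orderIso (RelIso.ofSurjective Specialization.toIrreducibleCloseds
    fun Z => ?_)).symm
  obtain ⟨x, hx⟩ := QuasiSober.sober Z.isIrreducible Z.isClosed
  exact ⟨Specialization.toEquiv x, IrreducibleCloseds.ext hx.def⟩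

theorem topologicalKrullDim_eq_bot [IsEmpty T] : topologicalKrullDim T = ⊥ :=
  krullDim_eq_bot_iff.mpr ⟨fun Z => isEmptyElim Z.isIrreducible.nonempty.some⟩

theorem krullDim_specialization_eq_natCard_sub_one_iff [T0Space T] [Finite T] [Nonempty T] :
    krullDim (Specialization T) = (Nat.card T - 1 : ℕ) ↔
      ∀ x y : T, spord x y ∨ spord y x := by
  have : Finite (Specialization T) := ‹Finite T›
  have : Nonempty (Specialization T) := ‹Nonempty T›
  refine (krullDim_eq_natCard_sub_one_iff (α := Specialization T)).trans
    ⟨fun h x y => ?_, fun h a b => ?_⟩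
  · simpa only [spord_iff_specializes, Specialization.toEquiv_le_toEquiv] using
      h (Specialization.toEquiv y) (Specialization.toEquiv x)
  · simpa only [spord_iff_specializes, Specialization.ofEquiv_specializes_ofEquiv] using
      h (Specialization.ofEquiv b) (Specialization.ofEquiv a)

end SpecializationOrder

namespace XCal
open Order Finset
variable {X : Type*} [TopologicalSpace X]

theorem specializes_iff {Y Z : XCal X} : Y ⤳ Z ↔ (Y : Set X) ⊆ Z := by
  constructor
  · intro h
    obtain ⟨𝒪, h𝒪, hZ⟩ := Z.2.2
    rw [hZ]
    refine subset_sInter fun Ω hΩ => h.mem_open (s := {W : XCal X | (W : Set X) ⊆ Ω}) ?_ ?_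
    · exact isOpen_generateFrom_of_mem ⟨Ω, (h𝒪 Ω hΩ).1, (h𝒪 Ω hΩ).2, rfl⟩
    · exact hZ.le.trans (sInter_subset_of_mem hΩ)
  · intro hYZ
    rw [Specializes, nhds_generateFrom, nhds_generateFrom]
    refine le_iInf₂ ?_
    rintro _ ⟨hZ, Ω, hΩ, hΩc, rfl⟩
    exact iInf₂_le _ ⟨hYZ.trans hZ, Ω, hΩ, hΩc, rfl⟩

instance : T0Space (XCal X) :=
  ⟨fun _ _ h => Subtype.ext
    ((specializes_iff.mp h.specializes).antisymm (specializes_iff.mp h.specializes'))⟩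

theorem toEquiv_lt_toEquiv_iff {Y Z : XCal X} :
    Specialization.toEquiv Y < Specialization.toEquiv Z ↔ (Z : Set X) ⊂ Y := by
  simp only [lt_iff_le_not_ge, Specialization.toEquiv_le_toEquiv, specializes_iff]

/-- The sets `genOf (f '' Set.Ici k)` decrease strictly in `k`: `f k` lies in none of the later
ones. -/
theorem natCast_le_krullDim_of_specializes_imp_le
    (hB : IsTopologicalBasis {U : Set X | IsOpen U ∧ IsCompact U}) {m : ℕ}
    (f : Fin (m + 1) → X) (hf : ∀ i j, f j ⤳ f i → i ≤ j) :
    (m : WithBot ℕ∞) ≤ krullDim (Specialization (XCal X)) := by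
  let T : Fin (m + 1) → XCal X := fun k =>
    ⟨genOf (f '' Set.Ici k), ⟨f k, subset_genOf _ ⟨k, Set.self_mem_Ici, rfl⟩⟩,
      invClosed_genOf hB ((Set.finite_Ici k).image f)⟩
  have hT : StrictMono fun k => Specialization.toEquiv (T k) := by
    intro i j hij
    refine toEquiv_lt_toEquiv_iff.mpr
      ⟨genOf_mono (image_mono (Set.Ici_subset_Ici.mpr hij.le)), fun hsub => ?_⟩
    obtain ⟨_, ⟨l, hjl, rfl⟩, hil⟩ :=
      mem_genOf.mp (hsub (subset_genOf _ ⟨i, Set.self_mem_Ici, rfl⟩))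
    exact (hij.trans_le ((Set.mem_Ici.mp hjl).trans (hf l i hil))).false
  exact (LTSeries.mk m _ hT).length_le_krullDim

theorem natCast_le_krullDim_of_card_eq [T0Space X]
    (hB : IsTopologicalBasis {U : Set X | IsOpen U ∧ IsCompact U}) (s : Finset X) {m : ℕ}
    (hs : #s = m + 1) : (m : WithBot ℕ∞) ≤ krullDim (Specialization (XCal X)) := by
  obtain ⟨g, hg⟩ := (s.map Specialization.toEquiv.toEmbedding).exists_fin_le_imp_le
    (n := m + 1) (by rwa [card_map])
  exact natCast_le_krullDim_of_specializes_imp_le hB (fun i => Specialization.ofEquiv (g i))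
    fun i j h => hg i j h

instance [IsEmpty X] : IsEmpty (XCal X) :=
  ⟨fun Y => isEmptyElim Y.2.1.some⟩

/-- A strict chain in `𝒳(X)` is a chain of nonempty subsets, strictly decreasing in size. -/
theorem krullDim_specialization_le_natCard_sub_one [Finite X] :
    krullDim (Specialization (XCal X)) ≤ (Nat.card X - 1 : ℕ) := by
  have hcard (Y : XCal X) : (Y : Set X).ncard - 1 < Nat.card X := by
    have := (Set.ncard_pos).mpr Y.2.1
    have := Set.ncard_le_card (Y : Set X)
    omega
  let φ : Specialization (XCal X) → (Fin (Nat.card X))ᵒᵈ := fun Y =>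
    OrderDual.toDual ⟨((Specialization.ofEquiv Y : XCal X) : Set X).ncard - 1, hcard _⟩
  have hφ : StrictMono φ := by
    intro Y Z hYZ
    have hpos := (Set.ncard_pos).mpr (Specialization.ofEquiv Z).2.1
    have hlt : ((Specialization.ofEquiv Z : XCal X) : Set X).ncard <
        ((Specialization.ofEquiv Y : XCal X) : Set X).ncard :=
      Set.ncard_lt_ncard (toEquiv_lt_toEquiv_iff.mp hYZ)
    change _ - 1 < _ - 1
    omega
  calc krullDim (Specialization (XCal X)) ≤ krullDim (Fin (Nat.card X)) :=
        krullDim_orderDual (α := Fin (Nat.card X)) ▸ krullDim_le_of_strictMono φ hφ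
    _ ≤ _ := by simpa using krullDim_le_natCard_sub_one (α := Fin (Nat.card X))

theorem krullDim_specialization_eq_natCard_sub_one [T0Space X] [Finite X] [Nonempty X]
    (hB : IsTopologicalBasis {U : Set X | IsOpen U ∧ IsCompact U}) :
    krullDim (Specialization (XCal X)) = (Nat.card X - 1 : ℕ) := by
  have := Fintype.ofFinite X
  refine krullDim_specialization_le_natCard_sub_one.antisymm
    (natCast_le_krullDim_of_card_eq hB univ ?_)
  rw [card_univ, ← Nat.card_eq_fintype_card]
  exact (Nat.sub_add_cancel Nat.card_pos).symm

theorem krullDim_specialization_eq_top [T0Space X] [Infinite X]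
    (hB : IsTopologicalBasis {U : Set X | IsOpen U ∧ IsCompact U}) :
    krullDim (Specialization (XCal X)) = ⊤ :=
  ENat.WithBot.eq_top_iff_forall_ge.mpr fun m =>
    let ⟨s, hs⟩ := Infinite.exists_subset_card_eq X (m + 1)
    natCast_le_krullDim_of_card_eq hB s hs

theorem krullDim_specialization_le [T0Space X]
    (hB : IsTopologicalBasis {U : Set X | IsOpen U ∧ IsCompact U}) :
    krullDim (Specialization X) ≤ krullDim (Specialization (XCal X)) :=
  iSup_le fun p => natCast_le_krullDim_of_specializes_imp_le hB
    (fun i => Specialization.ofEquiv (p i)) fun _ _ h => p.strictMono.le_iff_le.mp h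

end XCal

/-- Dimension of `𝒳(X)`: (1) if `X` is finite with `n > 0` elements,
then `dim 𝒳(X) = n - 1`; (2) if `X` is infinite, then `dim 𝒳(X) = ∞`;
(3) `dim 𝒳(X) ≥ dim X`; (4) if `X` is finite, `dim 𝒳(X) = dim X` iff the
specialization order on `X` is total. -/
theorem stmt11 {X : Type*} [TopologicalSpace X] (hX : IsSpectralSpace X) :
    (∀ n : ℕ, 0 < n → Nat.card X = n →
      topologicalKrullDim (XCal X) = ((n - 1 : ℕ) : WithBot ℕ∞)) ∧
    (Infinite X → topologicalKrullDim (XCal X) = ⊤) ∧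
    topologicalKrullDim X ≤ topologicalKrullDim (XCal X) ∧
    (Finite X →
      (topologicalKrullDim (XCal X) = topologicalKrullDim X ↔
        ∀ x y : X, spord x y ∨ spord y x)) := by
  obtain ⟨hT0, -, hsober, hB, -⟩ := hX
  have hXCal : Order.krullDim (Specialization (XCal X)) ≤ topologicalKrullDim (XCal X) :=
    krullDim_specialization_le_topologicalKrullDim
  have hXCal_of_finite [Finite X] :
      topologicalKrullDim (XCal X) = Order.krullDim (Specialization (XCal X)) :=
    have := quasiSober_of_finite (T := XCal X)
    topologicalKrullDim_eq_krullDim_specialization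
  refine ⟨fun n hn hcard => ?_, fun hinf => ?_, ?_, fun hfin => ?_⟩
  · obtain ⟨_, _⟩ := Nat.card_pos_iff.mp (hcard ▸ hn)
    rw [hXCal_of_finite, XCal.krullDim_specialization_eq_natCard_sub_one hB, hcard]
  · exact top_le_iff.mp (XCal.krullDim_specialization_eq_top hB ▸ hXCal)
  · rw [topologicalKrullDim_eq_krullDim_specialization]
    exact (XCal.krullDim_specialization_le hB).trans hXCal
  · rcases isEmpty_or_nonempty X with _ | _
    · simp [topologicalKrullDim_eq_bot]
    · rw [hXCal_of_finite, XCal.krullDim_specialization_eq_natCard_sub_one hB,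
        topologicalKrullDim_eq_krullDim_specialization, eq_comm]
      exact krullDim_specialization_eq_natCard_sub_one_iff
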